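/- GATE identification conditional on the key covariate and the propensity score (the displayed chain in Section 2.3): under unconfoundedness and strict overlap, with G = σ(g ∘ X, π ∘ X) the σ-algebra generated by (Z, π(X)), one has E[A | G] = π(X) almost surely and E[Y1 − Y0 | σ(Z)] = E[ E[A·Y | G]/E[A | G] − E[(1−A)·Y | G]/E[(1−A) | G] | σ(Z) ] almost surely; in particular τ(z) equals the σ(Z)-conditional average of the difference of arm-specific conditional means given (Z, π(X)). -/

import Mathlib

open MeasureTheory ProbabilityTheory Filter

/-!
Since `σ(Z, π(X)) ≤ σ(X)` and `π(X)` is `σ(Z, π(X))`-measurable, the tower property turns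
`E[A | X] = π(X)` into `E[A | Z, π(X)] = π(X)`. Under unconfoundedness, almost every regular
conditional law given `X` makes `A` and `Y1` independent, so `E[A·Y1 | X] = π(X)·E[Y1 | X]`;
conditioning further on `(Z, π(X))` and pulling out `π(X)` gives
`E[A·Y | Z, π(X)] = π(X)·E[Y1 | Z, π(X)]`, and likewise for the control arm with `1 - π(X)`.
Overlap makes the divisions exact, so the integrand is `E[Y1 - Y0 | Z, π(X)]`, and one more tower
step down to `σ(Z)` concludes.
-/

theorem MeasureTheory.condExp_ae_eq_of_condExp_ae_eq_of_le {Ω : Type*} {m₁ m₂ mΩ : MeasurableSpace Ω}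
    {μ : Measure Ω} [IsFiniteMeasure μ] {f p : Ω → ℝ} (hm₂₁ : m₂ ≤ m₁) (hm₁ : m₁ ≤ mΩ)
    (hp : μ[f | m₁] =ᵐ[μ] p) (hpm : StronglyMeasurable[m₂] p) :
    μ[f | m₂] =ᵐ[μ] p := by
  calc μ[f | m₂] =ᵐ[μ] μ[μ[f | m₁] | m₂] := (condExp_condExp_of_le hm₂₁ hm₁).symm
    _ =ᵐ[μ] μ[p | m₂] := condExp_congr_ae hp
    _ = p := condExp_of_stronglyMeasurable (hm₂₁.trans hm₁) hpm (integrable_condExp.congr hp)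

theorem MeasureTheory.condExp_const_sub_ae_eq {Ω : Type*} {m mΩ : MeasurableSpace Ω}
    {μ : Measure Ω} [IsFiniteMeasure μ] {f : Ω → ℝ} (hm : m ≤ mΩ) (c : ℝ) (hf : Integrable f μ) :
    μ[fun ω => c - f ω | m] =ᵐ[μ] fun ω => c - μ[f | m] ω := by
  filter_upwards [condExp_sub (integrable_const c) hf m] with ω h
  rwa [Pi.sub_apply, condExp_const hm] at h

namespace ProbabilityTheory

variable {Ω : Type*} {m₁ m₂ mΩ : MeasurableSpace Ω} [StandardBorelSpace Ω] {hm₁ : m₁ ≤ mΩ}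
  {μ : Measure Ω} [IsFiniteMeasure μ]

theorem CondIndepFun.ae_indepFun_condExpKernel {β β' : Type*} {mβ : MeasurableSpace β}
    {mβ' : MeasurableSpace β'} [MeasurableSpace.CountableOrCountablyGenerated Ω (β × β')]
    {f : Ω → β} {g : Ω → β'} (h : CondIndepFun m₁ hm₁ f g μ) (hf : Measurable f)
    (hg : Measurable g) :
    ∀ᵐ ω ∂μ, f ⟂ᵢ[condExpKernel μ m₁ ω] g := by
  have h_map := (condIndepFun_iff_map_prod_eq_prod_map_map hf hg).mp h
  filter_upwards [ae_of_ae_trim hm₁ h_map] with ω hω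
  rw [indepFun_iff_map_prod_eq_prod_map_map hf.aemeasurable hg.aemeasurable]
  simpa [Kernel.map_apply _ (hf.prodMk hg), Kernel.map_apply _ hf, Kernel.map_apply _ hg,
    Kernel.prod_apply] using hω

variable {f g p : Ω → ℝ}

theorem CondIndepFun.condExp_mul_ae_eq (h : CondIndepFun m₁ hm₁ f g μ)
    (hf : Measurable f) (hg : Measurable g) (hfi : Integrable f μ) (hgi : Integrable g μ)
    (hfgi : Integrable (f * g) μ) :
    μ[f * g | m₁] =ᵐ[μ] μ[f | m₁] * μ[g | m₁] := by
  filter_upwards [h.ae_indepFun_condExpKernel hf hg, condExp_ae_eq_integral_condExpKernel hm₁ hfgi,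
    condExp_ae_eq_integral_condExpKernel hm₁ hfi, condExp_ae_eq_integral_condExpKernel hm₁ hgi]
    with ω hω hfg_eq hf_eq hg_eq
  rw [hfg_eq, Pi.mul_apply, hf_eq, hg_eq]
  exact hω.integral_mul_eq_mul_integral hf.aestronglyMeasurable hg.aestronglyMeasurable

theorem CondIndepFun.condExp_mul_ae_eq_mul_of_le (h : CondIndepFun m₁ hm₁ f g μ) (hm₂₁ : m₂ ≤ m₁)
    (hf : Measurable f) (hg : Measurable g) (hfi : Integrable f μ) (hgi : Integrable g μ)
    (hfgi : Integrable (f * g) μ) (hp : μ[f | m₁] =ᵐ[μ] p) (hpm : StronglyMeasurable[m₂] p) :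
    μ[f * g | m₂] =ᵐ[μ] p * μ[g | m₂] := by
  have h_fg : μ[f * g | m₁] =ᵐ[μ] p * μ[g | m₁] :=
    (h.condExp_mul_ae_eq hf hg hfi hgi hfgi).trans (hp.mul .rfl)
  calc μ[f * g | m₂] =ᵐ[μ] μ[μ[f * g | m₁] | m₂] := (condExp_condExp_of_le hm₂₁ hm₁).symm
    _ =ᵐ[μ] μ[p * μ[g | m₁] | m₂] := condExp_congr_ae h_fg
    _ =ᵐ[μ] p * μ[μ[g | m₁] | m₂] :=
      condExp_mul_of_stronglyMeasurable_left hpm (integrable_condExp.congr h_fg) integrable_condExp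
    _ =ᵐ[μ] p * μ[g | m₂] := EventuallyEq.rfl.mul (condExp_condExp_of_le hm₂₁ hm₁)

theorem CondIndepFun.condExp_mul_div_condExp_ae_eq {C : ℝ} (h : CondIndepFun m₁ hm₁ f g μ)
    (hm₂₁ : m₂ ≤ m₁) (hf : Measurable f) (hg : Measurable g) (hfb : ∀ᵐ ω ∂μ, ‖f ω‖ ≤ C)
    (hgi : Integrable g μ) (hp : μ[f | m₁] =ᵐ[μ] p) (hpm : StronglyMeasurable[m₂] p)
    (hp0 : ∀ᵐ ω ∂μ, p ω ≠ 0) :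
    (fun ω => μ[f * g | m₂] ω / μ[f | m₂] ω) =ᵐ[μ] μ[g | m₂] := by
  have hfi : Integrable f μ := .of_bound hf.aestronglyMeasurable C hfb
  filter_upwards [h.condExp_mul_ae_eq_mul_of_le hm₂₁ hf hg hfi hgi
      (hgi.bdd_mul hf.aestronglyMeasurable hfb) hp hpm,
    condExp_ae_eq_of_condExp_ae_eq_of_le hm₂₁ hm₁ hp hpm, hp0] with ω h_fg h_f hω
  rw [h_fg, h_f, Pi.mul_apply, mul_div_cancel_left₀ _ hω]

end ProbabilityTheory

theorem gate_identification_via_z_and_ps_general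
    {Ω : Type*} [MeasurableSpace Ω] [StandardBorelSpace Ω]
    {S : Type*} [MeasurableSpace S]
    (μ : Measure Ω) [IsProbabilityMeasure μ]
    (A : Ω → ℝ) (hAm : Measurable A) (hA01 : ∀ ω, A ω = 0 ∨ A ω = 1)
    (X : Ω → S) (hXm : Measurable X)
    (Y0 Y1 : Ω → ℝ) (hY0m : Measurable Y0) (hY1m : Measurable Y1)
    (hY0i : Integrable Y0 μ) (hY1i : Integrable Y1 μ)
    (Y : Ω → ℝ) (hYdef : ∀ ω, Y ω = A ω * Y1 ω + (1 - A ω) * Y0 ω)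
    (huncf : CondIndepFun (MeasurableSpace.comap X inferInstance) (hXm.comap_le)
      A (fun ω => (Y0 ω, Y1 ω)) μ)
    (π : S → ℝ) (hπm : Measurable π)
    (hπver : (fun ω => π (X ω)) =ᵐ[μ] μ[A | MeasurableSpace.comap X inferInstance])
    (δ : ℝ) (hδ0 : 0 < δ)
    (hover : ∀ᵐ ω ∂μ, δ ≤ π (X ω) ∧ π (X ω) ≤ 1 - δ)
    (g : S → ℝ) (hg : Measurable g) :
    (μ[A | MeasurableSpace.comap (fun ω => (g (X ω), π (X ω))) inferInstance]
        =ᵐ[μ] fun ω => π (X ω))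
    ∧ (μ[fun ω => Y1 ω - Y0 ω | MeasurableSpace.comap (fun ω => g (X ω)) inferInstance]
        =ᵐ[μ]
      μ[fun ω =>
          (μ[fun ω' => A ω' * Y ω'
              | MeasurableSpace.comap (fun ω'' => (g (X ω''), π (X ω''))) inferInstance]) ω
            / (μ[A | MeasurableSpace.comap (fun ω'' => (g (X ω''), π (X ω''))) inferInstance]) ω
          - (μ[fun ω' => (1 - A ω') * Y ω'
              | MeasurableSpace.comap (fun ω'' => (g (X ω''), π (X ω''))) inferInstance]) ω
            / (μ[fun ω' => 1 - A ω'
              | MeasurableSpace.comap (fun ω'' => (g (X ω''), π (X ω''))) inferInstance]) ω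
        | MeasurableSpace.comap (fun ω => g (X ω)) inferInstance]) := by
  have hX := hXm.comap_le
  have hGX : MeasurableSpace.comap (fun ω => (g (X ω), π (X ω))) inferInstance
      ≤ MeasurableSpace.comap X inferInstance :=
    MeasurableSpace.comap_le_comap_of_eq_comp _ (hg.prodMk hπm) rfl
  have hZG : MeasurableSpace.comap (fun ω => g (X ω)) inferInstance
      ≤ MeasurableSpace.comap (fun ω => (g (X ω), π (X ω))) inferInstance :=
    MeasurableSpace.comap_le_comap_of_eq_comp _ measurable_fst rfl
  have hπG : StronglyMeasurable[MeasurableSpace.comap (fun ω => (g (X ω), π (X ω))) inferInstance]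
      fun ω => π (X ω) :=
    (measurable_snd.comp (comap_measurable _)).stronglyMeasurable
  have hAb : ∀ ω, ‖A ω‖ ≤ 1 ∧ ‖1 - A ω‖ ≤ 1 := fun ω => by rcases hA01 ω with h | h <;> simp [h]
  have hA'X : μ[fun ω => 1 - A ω | MeasurableSpace.comap X inferInstance]
      =ᵐ[μ] fun ω => 1 - π (X ω) := by
    filter_upwards [condExp_const_sub_ae_eq hX 1
      (.of_bound hAm.aestronglyMeasurable 1 (ae_of_all _ fun ω => (hAb ω).1)), hπver] with ω h hω
    rw [h, hω]
  have hAY : (fun ω => A ω * Y ω) = A * Y1 := by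
    funext ω; rcases hA01 ω with h | h <;> simp [hYdef, h]
  have hA'Y : (fun ω => (1 - A ω) * Y ω) = (fun ω => 1 - A ω) * Y0 := by
    funext ω; rcases hA01 ω with h | h <;> simp [hYdef, h]
  have hindep1 : CondIndepFun _ hX A Y1 μ := huncf.comp measurable_id measurable_snd
  have hindep0 : CondIndepFun _ hX (fun ω => 1 - A ω) Y0 μ :=
    huncf.comp (measurable_const.sub measurable_id) measurable_fst
  have arm1 := hindep1.condExp_mul_div_condExp_ae_eq hGX hAm hY1m
    (ae_of_all _ fun ω => (hAb ω).1) hY1i hπver.symm hπG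
    (by filter_upwards [hover] with ω h using by linarith)
  have arm0 := hindep0.condExp_mul_div_condExp_ae_eq hGX (measurable_const.sub hAm) hY0m
    (ae_of_all _ fun ω => (hAb ω).2) hY0i hA'X (stronglyMeasurable_const.sub hπG)
    (by filter_upwards [hover] with ω h using by linarith)
  refine ⟨condExp_ae_eq_of_condExp_ae_eq_of_le hGX hX hπver.symm hπG, ?_⟩
  rw [hAY, hA'Y]
  refine (condExp_condExp_of_le hZG (hGX.trans hX)).symm.trans (condExp_congr_ae ?_)
  filter_upwards [arm1, arm0, condExp_sub hY1i hY0i _] with ω h1 h0 hsub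
  rw [h1, h0]
  exact hsub

/-- GATE identification conditional on the key covariate and the propensity
score: under unconfoundedness and strict overlap, with `G = σ(Z, π(X))` where `Z = g ∘ X`,
one has `E[A | G] = π(X)` a.s. and
`E[Y1 − Y0 | σ(Z)] = E[ E[A·Y|G]/E[A|G] − E[(1−A)·Y|G]/E[(1−A)|G] | σ(Z) ]` a.s. -/
theorem gate_identification_via_z_and_ps
    {Ω : Type*} [MeasurableSpace Ω] [StandardBorelSpace Ω]
    {S : Type*} [MeasurableSpace S]
    (μ : Measure Ω) [IsProbabilityMeasure μ]
    (A : Ω → ℝ) (hAm : Measurable A) (hA01 : ∀ ω, A ω = 0 ∨ A ω = 1)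
    (X : Ω → S) (hXm : Measurable X)
    (Y0 Y1 : Ω → ℝ) (hY0m : Measurable Y0) (hY1m : Measurable Y1)
    (hY0i : Integrable Y0 μ) (hY1i : Integrable Y1 μ)
    (Y : Ω → ℝ) (hYdef : ∀ ω, Y ω = A ω * Y1 ω + (1 - A ω) * Y0 ω)
    (huncf : CondIndepFun (MeasurableSpace.comap X inferInstance) (hXm.comap_le)
      A (fun ω => (Y0 ω, Y1 ω)) μ)
    (π : S → ℝ) (hπm : Measurable π)
    (hπver : (fun ω => π (X ω)) =ᵐ[μ] μ[A | MeasurableSpace.comap X inferInstance])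
    (δ : ℝ) (hδ0 : 0 < δ) (hδhalf : δ < 1 / 2)
    (hover : ∀ᵐ ω ∂μ, δ ≤ π (X ω) ∧ π (X ω) ≤ 1 - δ)
    (g : S → ℝ) (hg : Measurable g) :
    (μ[A | MeasurableSpace.comap (fun ω => (g (X ω), π (X ω))) inferInstance]
        =ᵐ[μ] fun ω => π (X ω))
    ∧ (μ[fun ω => Y1 ω - Y0 ω | MeasurableSpace.comap (fun ω => g (X ω)) inferInstance]
        =ᵐ[μ]
      μ[fun ω =>
          (μ[fun ω' => A ω' * Y ω'
              | MeasurableSpace.comap (fun ω'' => (g (X ω''), π (X ω''))) inferInstance]) ω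
            / (μ[A | MeasurableSpace.comap (fun ω'' => (g (X ω''), π (X ω''))) inferInstance]) ω
          - (μ[fun ω' => (1 - A ω') * Y ω'
              | MeasurableSpace.comap (fun ω'' => (g (X ω''), π (X ω''))) inferInstance]) ω
            / (μ[fun ω' => 1 - A ω'
              | MeasurableSpace.comap (fun ω'' => (g (X ω''), π (X ω''))) inferInstance]) ω
        | MeasurableSpace.comap (fun ω => g (X ω)) inferInstance]) :=
  gate_identification_via_z_and_ps_general μ A hAm hA01 X hXm Y0 Y1 hY0m hY1m hY0i hY1i Y hYdef
    huncf π hπm hπver δ hδ0 hover g hg
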